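/- For n ≥ 1, a topological space X d-validates the scheme C_n if and only if it d-validates C_n*, if and only if it C-validates C_n, if and only if X is hereditarily (n+1)-irresolvable. -/

import Mathlib

/-- Modal formulas: variables, ⊤, ¬, ∧, □. -/
inductive Fml : Type
  | var : ℕ → Fml
  | top : Fml
  | neg : Fml → Fml
  | and : Fml → Fml → Fml
  | box : Fml → Fml
deriving DecidableEq

namespace Fml
/-- Material implication, defined from ¬ and ∧. -/
def imp (φ ψ : Fml) : Fml := .neg (.and φ (.neg ψ))
/-- Disjunction. -/
def or (φ ψ : Fml) : Fml := .neg (.and (.neg φ) (.neg ψ))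
/-- ◇φ := ¬□¬φ. -/
def dia (φ : Fml) : Fml := .neg (.box (.neg φ))
/-- □*φ := φ ∧ □φ. -/
def boxs (φ : Fml) : Fml := .and φ (.box φ)
/-- ◇*φ := φ ∨ ◇φ. -/
def dias (φ : Fml) : Fml := Fml.or φ (dia φ)
end Fml

/-- Kripke satisfaction. -/
def sat {W : Type} (R : W → W → Prop) (V : ℕ → Set W) : W → Fml → Prop
  | x, .var p => x ∈ V p
  | _, .top => True
  | x, .neg φ => ¬ sat R V x φ
  | x, .and φ ψ => sat R V x φ ∧ sat R V x ψ
  | x, .box φ => ∀ y, R x y → sat R V y φ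

/-- P_n(φ0; φ1,...,φn): P_0(φ0) = ◇φ0, P_n(φ0,φ1,...,φn) = ◇(φ1 ∧ P_{n-1}(φ0,φ2,...,φn)). -/
def Pfml (φ0 : Fml) : List Fml → Fml
  | [] => φ0.dia
  | ψ :: rest => (Fml.and ψ (Pfml φ0 rest)).dia

/-- Conjunction of ¬(φ ∧ ψ) for ψ in the list. -/
def conjNeg (φ : Fml) : List Fml → Fml
  | [] => .top
  | ψ :: rest => .and (.neg (.and φ ψ)) (conjNeg φ rest)

/-- D_n: pairwise disjointness conjunction ⋀_{i<j} ¬(φ_i ∧ φ_j). -/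
def Dfml : List Fml → Fml
  | [] => .top
  | φ :: rest => .and (conjNeg φ rest) (Dfml rest)

/-- The scheme C_n instance on φ0,φ1,...,φn (φs = [φ1,...,φn]). -/
def Cfml (φ0 : Fml) (φs : List Fml) : Fml :=
  ((Dfml (φ0 :: φs)).boxs).imp ((φ0.dia).imp ((Fml.and φ0 (Fml.neg (Pfml φ0 φs))).dia))

/-- The scheme C_n* instance: as C_n but with ◇* in the consequent. -/
def CfmlStar (φ0 : Fml) (φs : List Fml) : Fml :=
  ((Dfml (φ0 :: φs)).boxs).imp ((φ0.dia).imp ((Fml.and φ0 (Fml.neg (Pfml φ0 φs))).dias))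

/-- An ascending R-chain. -/
def AscChain {W : Type} (R : W → W → Prop) (x : ℕ → W) : Prop := ∀ m, R (x m) (x (m+1))

/-- A strictly ascending R-chain. -/
def StrictAscChain {W : Type} (R : W → W → Prop) (x : ℕ → W) : Prop :=
  AscChain R x ∧ ∀ m, ¬ R (x (m+1)) (x m)

/-- The R-cluster of x. -/
def cluster {W : Type} (R : W → W → Prop) (x : W) : Set W := {y | x = y ∨ (R x y ∧ R y x)}

/-- The frame has a cycle of length k (k ≥ 1): k distinct points x_0 R x_1 R ... R x_{k-1} R x_0. -/
def HasCycle {W : Type} (R : W → W → Prop) (k : ℕ) : Prop :=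
  1 ≤ k ∧ ∃ x : ℕ → W, (∀ i j, i < k → j < k → x i = x j → i = j) ∧
    ∀ i < k, R (x i) (x ((i+1) % k))

/-- Circumference at most n: every cycle has length ≤ n. -/
def CircumLE {W : Type} (R : W → W → Prop) (n : ℕ) : Prop := ∀ k, HasCycle R k → k ≤ n

/-- The frame (W,R) validates the scheme C_n. -/
def ValidatesCn {W : Type} (R : W → W → Prop) (n : ℕ) : Prop :=
  ∀ (V : ℕ → Set W) (x : W) (φ0 : Fml) (φs : List Fml), φs.length = n →
    sat R V x (Cfml φ0 φs)

/-- A Boolean valuation on formulas (box-formulas and variables as atoms). -/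
def BoolEval (w : Fml → Bool) : Prop :=
  w .top = true ∧ (∀ φ, w (.neg φ) = !w φ) ∧ (∀ φ ψ, w (.and φ ψ) = (w φ && w ψ))

/-- Propositional tautologies. -/
def Tautology (φ : Fml) : Prop := ∀ w, BoolEval w → w φ = true

/-- Theorems of the smallest normal modal logic containing the axiom set Ax. -/
inductive Prov (Ax : Set Fml) : Fml → Prop
  | taut {φ} : Tautology φ → Prov Ax φ
  | kax (φ ψ) : Prov Ax ((Fml.box (φ.imp ψ)).imp ((Fml.box φ).imp (Fml.box ψ)))
  | ax {φ} : φ ∈ Ax → Prov Ax φ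
  | mp {φ ψ} : Prov Ax (φ.imp ψ) → Prov Ax φ → Prov Ax ψ
  | nec {φ} : Prov Ax φ → Prov Ax (.box φ)

/-- All instances of the transitivity scheme 4. -/
def Ax4 : Set Fml := {χ | ∃ φ, χ = (Fml.box φ).imp (Fml.box (Fml.box φ))}

/-- Axioms of K4C_n: scheme 4 together with all instances of scheme C_n. -/
def AxK4C (n : ℕ) : Set Fml :=
  Ax4 ∪ {χ | ∃ (φ0 : Fml) (φs : List Fml), φs.length = n ∧ χ = Cfml φ0 φs}

/-- X is hereditarily m-irresolvable: no nonempty subspace has m pairwise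
disjoint subsets each dense in the subspace. -/
def HeredIrres (X : Type) [TopologicalSpace X] (m : ℕ) : Prop :=
  ∀ S : Set X, S.Nonempty →
    ¬ ∃ D : Fin m → Set X, (∀ i, D i ⊆ S) ∧ (∀ i j, i ≠ j → Disjoint (D i) (D j)) ∧
      ∀ i, S ⊆ closure (D i)

/-- C-semantics truth sets: □ is interior (hence ◇ is closure). -/
def csat {X : Type} [TopologicalSpace X] (V : ℕ → Set X) : Fml → Set X
  | .var p => V p
  | .top => Set.univ
  | .neg φ => (csat V φ)ᶜ
  | .and φ ψ => csat V φ ∩ csat V ψ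
  | .box φ => interior (csat V φ)

/-- The derived set: set of limit points of Y. -/
def dset {X : Type} [TopologicalSpace X] (Y : Set X) : Set X := {x | x ∈ closure (Y \ {x})}

/-- d-semantics truth sets: ◇ is the derived-set operator. -/
def dsat {X : Type} [TopologicalSpace X] (V : ℕ → Set X) : Fml → Set X
  | .var p => V p
  | .top => Set.univ
  | .neg φ => (dsat V φ)ᶜ
  | .and φ ψ => dsat V φ ∩ dsat V ψ
  | .box φ => (dset ((dsat V φ)ᶜ))ᶜ

/-- The Alexandroff topology of a frame: open sets are the R-up-sets. -/
def alexTop {W : Type} (R : W → W → Prop) : TopologicalSpace W where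
  IsOpen O := ∀ x ∈ O, ∀ y, R x y → y ∈ O
  isOpen_univ := by intro x _ y _; trivial
  isOpen_inter := by intro s t hs ht x hx y hR; exact ⟨hs x hx.1 y hR, ht x hx.2 y hR⟩
  isOpen_sUnion := by
    intro S hS x hx y hR
    obtain ⟨t, htS, hxt⟩ := hx
    exact ⟨t, htS, hS t htS x hxt y hR⟩

/-!
Read ◇ as an operator δ on sets: closure for C-semantics, the derived set d for d-semantics.
Validity of C_n becomes a statement about sets A₀, …, Aₙ and P_δ = δ(A₁ ∩ δ(A₂ ∩ ⋯ δ(Aₙ ∩ δA₀))).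
If the Aᵢ are pairwise disjoint on an open set W and W ∩ A₀ ⊆ P_cl, then the traces of A₀, …, Aₙ on
W ∩ P_cl are n+1 disjoint sets dense in it, so hereditary (n+1)-irresolvability forces W ∩ A₀ = ∅.
This gives C-validity directly, and d-validity because P_d ⊆ P_cl. Conversely, if D₀, …, Dₙ are
disjoint and dense in a subspace, consecutive disjointness gives D₀ ⊆ d(D₁ ∩ d(⋯ d(Dₙ ∩ dD₀))), so a
point of D₁ refutes C_n* for φᵢ := Dᵢ. Finally d ⊆ cl, so both d-validity and C-validity of C_n
imply d-validity of C_n*.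
-/

open Set

section Semantics

variable {X : Type*}

def semWith (δ : Set X → Set X) (V : ℕ → Set X) : Fml → Set X
  | .var p => V p
  | .top => univ
  | .neg φ => (semWith δ V φ)ᶜ
  | .and φ ψ => semWith δ V φ ∩ semWith δ V ψ
  | .box φ => (δ (semWith δ V φ)ᶜ)ᶜ

def disjointLocus (l : List (Set X)) : Set X := {x | l.Pairwise fun A B => x ∉ A ∩ B}

def Pset (δ : Set X → Set X) (A0 : Set X) : List (Set X) → Set X
  | [] => δ A0
  | B :: r => δ (B ∩ Pset δ A0 r)

lemma pairwise_disjoint_inter_of_subset_disjointLocus {S : Set X} {l : List (Set X)}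
    (h : S ⊆ disjointLocus l) : (l.map (· ∩ S)).Pairwise Disjoint := by
  rw [List.pairwise_map, List.pairwise_iff_get]
  intro i j hij
  rw [Set.disjoint_left]
  rintro z ⟨hzi, hzS⟩ ⟨hzj, -⟩
  exact List.pairwise_iff_get.mp (h hzS) i j hij ⟨hzi, hzj⟩

lemma disjointLocus_eq_univ {l : List (Set X)} (h : l.Pairwise Disjoint) :
    disjointLocus l = univ :=
  eq_univ_of_forall fun _ => h.imp fun hAB hx => disjoint_left.mp hAB (mem_of_mem_inter_left hx)
    (mem_of_mem_inter_right hx)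

lemma exists_valuation (A0 : Set X) (L : List (Set X)) :
    ∃ (V : ℕ → Set X) (φs : List Fml), φs.length = L.length ∧ V 0 = A0 ∧
      ∀ δ, φs.map (semWith δ V) = L := by
  refine ⟨fun i => (A0 :: L).getD i ∅, List.ofFn fun i : Fin L.length => .var (i + 1),
    List.length_ofFn, rfl, fun δ => ?_⟩
  rw [List.map_ofFn]
  conv_rhs => rw [← List.ofFn_getElem (xs := L)]
  congr 1
  funext i
  simp [semWith]

variable (δ : Set X → Set X) (V : ℕ → Set X)

lemma mem_semWith_imp {φ ψ : Fml} {x : X} :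
    x ∈ semWith δ V (φ.imp ψ) ↔ (x ∈ semWith δ V φ → x ∈ semWith δ V ψ) := by
  simp [Fml.imp, semWith]

lemma semWith_dia (φ : Fml) : semWith δ V φ.dia = δ (semWith δ V φ) := by
  simp [Fml.dia, semWith]

lemma semWith_and_neg (φ ψ : Fml) :
    semWith δ V (.and φ (.neg ψ)) = semWith δ V φ \ semWith δ V ψ := rfl

lemma semWith_Dfml (l : List Fml) :
    semWith δ V (Dfml l) = disjointLocus (l.map (semWith δ V)) := by
  have mem_conjNeg {x : X} (φ : Fml) (r : List Fml) :
      x ∈ semWith δ V (conjNeg φ r) ↔ ∀ ψ ∈ r, x ∉ semWith δ V φ ∩ semWith δ V ψ := by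
    induction r with
    | nil => simp [conjNeg, semWith]
    | cons ψ r ih => simp [conjNeg, semWith, ih]
  induction l with
  | nil => simp [Dfml, semWith, disjointLocus]
  | cons φ r ih =>
    ext x
    rw [Dfml, semWith, mem_inter_iff, mem_conjNeg, ih]
    simp [disjointLocus, List.pairwise_cons]

lemma semWith_Pfml (φ0 : Fml) (l : List Fml) :
    semWith δ V (Pfml φ0 l) = Pset δ (semWith δ V φ0) (l.map (semWith δ V)) := by
  induction l with
  | nil => exact semWith_dia δ V φ0
  | cons ψ r ih => rw [Pfml, semWith_dia, List.map_cons, Pset, ← ih]; rfl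

lemma semWith_imp_imp_eq_univ_iff (φ ψ χ : Fml) :
    semWith δ V (φ.imp (ψ.imp χ)) = univ ↔
      semWith δ V φ ∩ semWith δ V ψ ⊆ semWith δ V χ := by
  simp [eq_univ_iff_forall, subset_def, mem_semWith_imp]

variable [TopologicalSpace X] {δ} (hδ : ∀ A, A ∪ δ A = closure A)
include hδ

lemma semWith_boxs (φ : Fml) : semWith δ V φ.boxs = interior (semWith δ V φ) := by
  rw [interior_eq_compl_closure_compl, ← hδ, compl_union, compl_compl]
  rfl

lemma semWith_dias (φ : Fml) : semWith δ V φ.dias = closure (semWith δ V φ) := by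
  rw [← hδ]
  simp [Fml.dias, Fml.or, Fml.dia, semWith, compl_inter]

end Semantics

section Topology

variable {X : Type} [TopologicalSpace X]

lemma csat_eq_semWith (V : ℕ → Set X) : csat V = semWith closure V := by
  funext φ
  induction φ with
  | var p => rfl
  | top => rfl
  | neg φ ih => simp [csat, semWith, ih]
  | and φ ψ ihφ ihψ => simp [csat, semWith, ihφ, ihψ]
  | box φ ih => rw [csat, semWith, ih, closure_compl, compl_compl]

lemma dsat_eq_semWith (V : ℕ → Set X) : dsat V = semWith dset V := by
  funext φ
  induction φ with
  | var p => rfl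
  | top => rfl
  | neg φ ih => simp [dsat, semWith, ih]
  | and φ ψ ihφ ihψ => simp [dsat, semWith, ihφ, ihψ]
  | box φ ih => simp [dsat, semWith, ih]

lemma dset_subset_closure (A : Set X) : dset A ⊆ closure A :=
  fun _ hx => closure_mono sdiff_subset hx

lemma mem_dset_of_notMem {A : Set X} {x : X} (hx : x ∈ closure A) (hxA : x ∉ A) : x ∈ dset A := by
  show x ∈ closure (A \ {x})
  rwa [sdiff_singleton_eq_self hxA]

lemma union_dset_eq_closure (A : Set X) : A ∪ dset A = closure A := by
  refine (union_subset subset_closure (dset_subset_closure A)).antisymm fun x hx => ?_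
  by_cases hxA : x ∈ A
  · exact Or.inl hxA
  · exact Or.inr (mem_dset_of_notMem hx hxA)

end Topology

def SetValidCn (X : Type*) [TopologicalSpace X] (δ ε : Set X → Set X) (n : ℕ) : Prop :=
  ∀ (A0 : Set X) (L : List (Set X)), L.length = n →
    interior (disjointLocus (A0 :: L)) ∩ δ A0 ⊆ ε (A0 \ Pset δ A0 L)

section Validity

variable {X : Type*} [TopologicalSpace X]

lemma forall_semWith_eq_univ_iff {δ ε : Set X → Set X} (hδ : ∀ A, A ∪ δ A = closure A)
    (G : Fml → Fml) (hG : ∀ V φ, semWith δ V (G φ) = ε (semWith δ V φ)) (n : ℕ) :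
    (∀ (V : ℕ → Set X) (φ0 : Fml) (φs : List Fml), φs.length = n →
      semWith δ V ((Dfml (φ0 :: φs)).boxs.imp (φ0.dia.imp (G (.and φ0 (.neg (Pfml φ0 φs)))))) =
        univ) ↔ SetValidCn X δ ε n := by
  have key (V : ℕ → Set X) (φ0 : Fml) (φs : List Fml) :
      semWith δ V ((Dfml (φ0 :: φs)).boxs.imp (φ0.dia.imp (G (.and φ0 (.neg (Pfml φ0 φs)))))) =
        univ ↔ interior (disjointLocus (semWith δ V φ0 :: φs.map (semWith δ V))) ∩
          δ (semWith δ V φ0) ⊆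
            ε (semWith δ V φ0 \ Pset δ (semWith δ V φ0) (φs.map (semWith δ V))) := by
    rw [semWith_imp_imp_eq_univ_iff, semWith_boxs V hδ, semWith_Dfml, semWith_dia, hG,
      semWith_and_neg, semWith_Pfml, List.map_cons]
  constructor
  · intro h A0 L hL
    obtain ⟨V, φs, hlen, hV0, hmap⟩ := exists_valuation A0 L
    have := (key V (.var 0) φs).1 (h V _ φs (hlen.trans hL))
    rwa [hmap, show semWith δ V (.var 0) = A0 from hV0] at this
  · intro h V φ0 φs hlen
    exact (key V φ0 φs).2 (h _ _ (by simp [hlen]))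

lemma forall_semWith_Cfml_iff {δ : Set X → Set X} (hδ : ∀ A, A ∪ δ A = closure A) (n : ℕ) :
    (∀ (V : ℕ → Set X) (φ0 : Fml) (φs : List Fml), φs.length = n →
      semWith δ V (Cfml φ0 φs) = univ) ↔ SetValidCn X δ δ n :=
  forall_semWith_eq_univ_iff hδ Fml.dia (semWith_dia δ) n

lemma forall_semWith_CfmlStar_iff {δ : Set X → Set X} (hδ : ∀ A, A ∪ δ A = closure A) (n : ℕ) :
    (∀ (V : ℕ → Set X) (φ0 : Fml) (φs : List Fml), φs.length = n →
      semWith δ V (CfmlStar φ0 φs) = univ) ↔ SetValidCn X δ closure n :=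
  forall_semWith_eq_univ_iff hδ Fml.dias (semWith_dias · hδ) n

end Validity

section Irresolvable

variable {X : Type} [TopologicalSpace X]

lemma isClosed_Pset_closure (A0 : Set X) (L : List (Set X)) : IsClosed (Pset closure A0 L) := by
  cases L <;> exact isClosed_closure

lemma Pset_closure_append_subset (A0 : Set X) (l₁ l₂ : List (Set X)) :
    Pset closure A0 (l₁ ++ l₂) ⊆ Pset closure A0 l₂ := by
  induction l₁ with
  | nil => exact subset_rfl
  | cons B r ih => exact closure_minimal (inter_subset_right.trans ih) (isClosed_Pset_closure _ _)

lemma Pset_closure_subset_closure (A0 : Set X) (L : List (Set X)) :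
    Pset closure A0 L ⊆ closure A0 := by
  simpa [Pset] using Pset_closure_append_subset A0 L []

lemma Pset_dset_subset_Pset_closure (A0 : Set X) (L : List (Set X)) :
    Pset dset A0 L ⊆ Pset closure A0 L := by
  induction L with
  | nil => exact dset_subset_closure A0
  | cons B r ih =>
    exact (dset_subset_closure _).trans (closure_mono (inter_subset_inter_right B ih))

lemma exists_Pset_closure_subset_closure_inter {A0 B : Set X} {L : List (Set X)}
    (hB : B ∈ A0 :: L) : ∃ Q ⊆ closure A0, Pset closure A0 L ⊆ closure (B ∩ Q) := by
  rcases List.mem_cons.mp hB with rfl | hB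
  · exact ⟨B, subset_closure, by simpa using Pset_closure_subset_closure B L⟩
  · obtain ⟨l₁, l₂, rfl⟩ := List.append_of_mem hB
    exact ⟨_, Pset_closure_subset_closure A0 l₂, Pset_closure_append_subset A0 l₁ (B :: l₂)⟩

lemma subset_closure_inter_Pset_closure {W A0 B : Set X} {L : List (Set X)} (hW : IsOpen W)
    (hA0 : W ∩ A0 ⊆ Pset closure A0 L) (hB : B ∈ A0 :: L) :
    W ∩ Pset closure A0 L ⊆ closure (B ∩ (W ∩ Pset closure A0 L)) := by
  obtain ⟨Q, hQ, hPQ⟩ := exists_Pset_closure_subset_closure_inter hB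
  have hWcl : W ∩ closure A0 ⊆ Pset closure A0 L :=
    hW.inter_closure.trans (closure_minimal hA0 (isClosed_Pset_closure A0 L))
  rintro y ⟨hyW, hyP⟩
  refine closure_mono ?_ (hW.inter_closure ⟨hyW, hPQ hyP⟩)
  rintro z ⟨hzW, hzB, hzQ⟩
  exact ⟨hzB, hzW, hWcl ⟨hzW, hQ hzQ⟩⟩

lemma HeredIrres.not_pairwise_disjoint {l : List (Set X)} (h : HeredIrres X l.length)
    {S : Set X} (hS : S.Nonempty) (hsub : ∀ B ∈ l, B ⊆ S) (hdense : ∀ B ∈ l, S ⊆ closure B) :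
    ¬ l.Pairwise Disjoint := by
  intro hl
  refine h S hS ⟨l.get, fun i => hsub _ (l.get_mem i), fun i j hij => ?_,
    fun i => hdense _ (l.get_mem i)⟩
  rcases lt_or_gt_of_ne hij with hij | hij
  · exact List.pairwise_iff_get.mp hl i j hij
  · exact (List.pairwise_iff_get.mp hl j i hij).symm

lemma HeredIrres.disjoint_closure {A0 W : Set X} {L : List (Set X)}
    (h : HeredIrres X (L.length + 1)) (hW : IsOpen W) (hWD : W ⊆ disjointLocus (A0 :: L))
    (hA0 : W ∩ A0 ⊆ Pset closure A0 L) : Disjoint W (closure A0) := by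
  refine Disjoint.closure_right ?_ hW
  rw [disjoint_iff_inter_eq_empty]
  by_contra hne
  obtain ⟨y, hy⟩ := nonempty_iff_ne_empty.mpr hne
  set S := W ∩ Pset closure A0 L
  refine HeredIrres.not_pairwise_disjoint (l := (A0 :: L).map (· ∩ S)) (S := S) (by simpa using h)
    ⟨y, hy.1, hA0 hy⟩ ?_ ?_ (pairwise_disjoint_inter_of_subset_disjointLocus
      (inter_subset_left.trans hWD))
  · simp only [List.mem_map]
    rintro _ ⟨B, -, rfl⟩
    exact inter_subset_right
  · simp only [List.mem_map]
    rintro _ ⟨B, hB, rfl⟩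
    exact subset_closure_inter_Pset_closure hW hA0 hB

variable {n : ℕ}

lemma HeredIrres.setValidCn_closure (h : HeredIrres X (n + 1)) :
    SetValidCn X closure closure n := by
  rintro A0 L rfl x ⟨hxU, hxA0⟩
  by_contra hx
  set W := interior (disjointLocus (A0 :: L)) ∩ (closure (A0 \ Pset closure A0 L))ᶜ
  have hW : IsOpen W := isOpen_interior.inter isClosed_closure.isOpen_compl
  have hWA0 : W ∩ A0 ⊆ Pset closure A0 L := fun y ⟨⟨_, hy⟩, hyA0⟩ =>
    by_contra fun hyP => hy (subset_closure ⟨hyA0, hyP⟩)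
  exact disjoint_left.mp (h.disjoint_closure hW (inter_subset_left.trans interior_subset) hWA0)
    ⟨hxU, hx⟩ hxA0

lemma HeredIrres.setValidCn_dset (h : HeredIrres X (n + 1)) : SetValidCn X dset dset n := by
  rintro A0 L rfl x ⟨hxU, hxA0⟩
  by_contra hx
  set P := Pset dset A0 L
  set W := interior (disjointLocus (A0 :: L)) ∩ (closure ((A0 \ P) \ {x}))ᶜ
  have hW : IsOpen W := isOpen_interior.inter isClosed_closure.isOpen_compl
  have hxW : x ∈ W := ⟨hxU, hx⟩
  have hWP : W ∩ (A0 \ {x}) ⊆ P := fun y ⟨⟨_, hy⟩, hyA0, hyx⟩ =>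
    by_contra fun hyP => hy (subset_closure ⟨⟨hyA0, hyP⟩, hyx⟩)
  have hxP : x ∈ closure P := closure_mono hWP (hW.inter_closure ⟨hxW, hxA0⟩)
  have hWA0 : W ∩ A0 ⊆ Pset closure A0 L := by
    rintro y ⟨hyW, hyA0⟩
    have hPc := Pset_dset_subset_Pset_closure A0 L
    rcases eq_or_ne y x with rfl | hyx
    · exact closure_minimal hPc (isClosed_Pset_closure A0 L) hxP
    · exact hPc (hWP ⟨hyW, hyA0, hyx⟩)
  exact disjoint_left.mp (h.disjoint_closure hW (inter_subset_left.trans interior_subset) hWA0)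
    hxW (dset_subset_closure A0 hxA0)

lemma SetValidCn.mono_right {δ ε ε' : Set X → Set X} (h : SetValidCn X δ ε n)
    (hε : ∀ A, ε A ⊆ ε' A) : SetValidCn X δ ε' n :=
  fun A0 L hL => (h A0 L hL).trans (hε _)

lemma SetValidCn.dset_of_closure (h : SetValidCn X closure closure n) :
    SetValidCn X dset closure n := fun A0 L hL _ ⟨hxU, hxA0⟩ =>
  closure_mono (sdiff_subset_sdiff_right (Pset_dset_subset_Pset_closure A0 L))
    (h A0 L hL ⟨hxU, dset_subset_closure A0 hxA0⟩)

lemma subset_Pset_dset {S A0 : Set X} (hA0 : S ⊆ closure A0) {L : List (Set X)}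
    (hL : ∀ B ∈ L, B ⊆ S ∧ S ⊆ closure B) (hdisj : (A0 :: L).Pairwise Disjoint) {C : Set X}
    (hC : C ⊆ S) (hCL : Disjoint C (L.headD A0)) : C ⊆ Pset dset A0 L := by
  induction L generalizing C with
  | nil => exact fun y hy => mem_dset_of_notMem (hA0 (hC hy)) (disjoint_left.mp hCL hy)
  | cons B r ih =>
    obtain ⟨hBS, hSB⟩ := hL B List.mem_cons_self
    have hBr : Disjoint B (r.headD A0) := by
      cases r with
      | nil => exact (List.pairwise_cons.mp hdisj).1 B List.mem_cons_self |>.symm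
      | cons B' r =>
        exact (List.pairwise_cons.mp (List.pairwise_cons.mp hdisj).2).1 B' List.mem_cons_self
    have hBP : B ⊆ Pset dset A0 r := ih (fun B' hB' => hL B' (List.mem_cons_of_mem B hB'))
      (hdisj.sublist (.cons_cons A0 (.cons B (.refl r)))) hBS hBr
    intro y hy
    show y ∈ dset (B ∩ Pset dset A0 r)
    rw [inter_eq_left.mpr hBP]
    exact mem_dset_of_notMem (hSB (hC hy)) (disjoint_left.mp hCL hy)

lemma heredIrres_of_setValidCn (hn : 1 ≤ n) (h : SetValidCn X dset closure n) :
    HeredIrres X (n + 1) := by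
  obtain ⟨m, rfl⟩ : ∃ m, n = m + 1 := ⟨n - 1, by omega⟩
  rintro S hS ⟨D, hDS, hDdisj, hDdense⟩
  set L := List.ofFn fun i : Fin (m + 1) => D i.succ
  have hpair : (D 0 :: L).Pairwise Disjoint := by
    rw [← List.ofFn_succ, List.pairwise_ofFn]
    exact fun i j hij => hDdisj i j hij.ne
  have hL : ∀ B ∈ L, B ⊆ S ∧ S ⊆ closure B := by
    simp only [L, List.mem_ofFn]
    rintro _ ⟨i, rfl⟩
    exact ⟨hDS _, hDdense _⟩
  have hD0 : D 0 ⊆ Pset dset (D 0) L :=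
    subset_Pset_dset (hDdense 0) hL hpair (hDS 0) (by simpa [L] using hDdisj 0 1 (by simp))
  obtain ⟨x, hx⟩ : (D 1).Nonempty := closure_nonempty_iff.mp (hS.mono (hDdense 1))
  have hxd : x ∈ dset (D 0) :=
    mem_dset_of_notMem (hDdense 0 (hDS 1 hx)) (disjoint_left.mp (hDdisj 1 0 (by simp)) hx)
  have := h (D 0) L (by simp [L]) ⟨by simp [disjointLocus_eq_univ hpair], hxd⟩
  rwa [sdiff_eq_empty.mpr hD0, closure_empty] at this

end Irresolvable

/-- for n ≥ 1, the following are equivalent for a space X: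
X d-validates C_n; X d-validates C_n*; X C-validates C_n; X is hereditarily
(n+1)-irresolvable. -/
theorem stmt18 {X : Type} [TopologicalSpace X] (n : ℕ) (hn : 1 ≤ n) :
    ((∀ (V : ℕ → Set X) (φ0 : Fml) (φs : List Fml), φs.length = n →
        dsat V (Cfml φ0 φs) = Set.univ) ↔
      (∀ (V : ℕ → Set X) (φ0 : Fml) (φs : List Fml), φs.length = n →
        dsat V (CfmlStar φ0 φs) = Set.univ)) ∧
    ((∀ (V : ℕ → Set X) (φ0 : Fml) (φs : List Fml), φs.length = n →
        dsat V (CfmlStar φ0 φs) = Set.univ) ↔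
      (∀ (V : ℕ → Set X) (φ0 : Fml) (φs : List Fml), φs.length = n →
        csat V (Cfml φ0 φs) = Set.univ)) ∧
    ((∀ (V : ℕ → Set X) (φ0 : Fml) (φs : List Fml), φs.length = n →
        csat V (Cfml φ0 φs) = Set.univ) ↔ HeredIrres X (n+1)) := by
  simp only [dsat_eq_semWith, csat_eq_semWith]
  rw [forall_semWith_Cfml_iff union_dset_eq_closure,
    forall_semWith_CfmlStar_iff union_dset_eq_closure,
    forall_semWith_Cfml_iff fun A => union_eq_right.mpr subset_closure]
  have hHI := heredIrres_of_setValidCn (X := X) hn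
  exact ⟨⟨fun h => h.mono_right dset_subset_closure, fun h => (hHI h).setValidCn_dset⟩,
    ⟨fun h => (hHI h).setValidCn_closure, SetValidCn.dset_of_closure⟩,
    ⟨fun h => hHI h.dset_of_closure, HeredIrres.setValidCn_closure⟩⟩
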